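/- With A = Z/2[x_1,x_2,y_1,y_2], Sq as above, s_1 = t_3 y_2 + t_2 y_2^2 + y_2^4, s_2 = t_3 y_1 + t_2 y_1^2 + y_1^4, t_8 = s_1^2 + s_1 s_2 + s_2^2, and t_12 = s_1 s_2 (s_1 + s_2): the degree-9 and degree-10 homogeneous components of Sq(t_8) are both zero, the degree-13 component of Sq(t_12) is zero, and the degree-14 component of Sq(t_12) equals t_2 · t_12. -/
import Mathlib

open MvPolynomial

noncomputable section

abbrev A11 := MvPolynomial (Fin 4) (ZMod 2)

def x₁ : A11 := X 0
def x₂ : A11 := X 1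
def y₁ : A11 := X 2
def y₂ : A11 := X 3
def t₂ : A11 := x₁ ^ 2 + x₁ * x₂ + x₂ ^ 2
def t₃ : A11 := x₁ * x₂ * (x₁ + x₂)
def s₁ : A11 := t₃ * y₂ + t₂ * y₂ ^ 2 + y₂ ^ 4
def s₂ : A11 := t₃ * y₁ + t₂ * y₁ ^ 2 + y₁ ^ 4
def t₈ : A11 := s₁ ^ 2 + s₁ * s₂ + s₂ ^ 2
def t₁₂ : A11 := s₁ * s₂ * (s₁ + s₂)

def Sq : A11 →ₐ[ZMod 2] A11 := aeval (fun i => X i + X i ^ 2)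

lemma h2 : (2 : A11) = 0 := by
  have := CharP.cast_eq_zero A11 2
  simpa using this

lemma hpow {p : A11} {n k m : ℕ} (h : p.IsHomogeneous n) (e : n * k = m) :
    (p ^ k).IsHomogeneous m := by
  subst e
  induction k with
  | zero => simpa using isHomogeneous_one (Fin 4) (ZMod 2)
  | succ k ih => rw [pow_succ, Nat.mul_succ]; exact ih.mul h

lemma hmul {p q : A11} {m n k : ℕ} (hp : p.IsHomogeneous m) (hq : q.IsHomogeneous n)
    (e : m + n = k) : (p * q).IsHomogeneous k := e ▸ hp.mul hq

lemma hX : ∀ i : Fin 4, (X i : A11).IsHomogeneous 1 := fun i => isHomogeneous_X _ _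

lemma ht2 : t₂.IsHomogeneous 2 := by
  unfold t₂ x₁ x₂
  exact ((hpow (hX 0) rfl).add (hmul (hX 0) (hX 1) rfl)).add (hpow (hX 1) rfl)

lemma ht3 : t₃.IsHomogeneous 3 := by
  unfold t₃ x₁ x₂
  exact hmul (hmul (hX 0) (hX 1) rfl) ((hX 0).add (hX 1)) rfl

lemma hs1 : s₁.IsHomogeneous 4 := by
  unfold s₁ y₂
  exact ((hmul ht3 (hX 3) rfl).add (hmul ht2 (hpow (hX 3) rfl) rfl)).add (hpow (hX 3) rfl)

lemma hs2 : s₂.IsHomogeneous 4 := by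
  unfold s₂ y₁
  exact ((hmul ht3 (hX 2) rfl).add (hmul ht2 (hpow (hX 2) rfl) rfl)).add (hpow (hX 2) rfl)

lemma ht8 : t₈.IsHomogeneous 8 := by
  unfold t₈
  exact ((hpow hs1 rfl).add (hmul hs1 hs2 rfl)).add (hpow hs2 rfl)

lemma ht12 : t₁₂.IsHomogeneous 12 := by
  unfold t₁₂
  exact hmul (hmul hs1 hs2 rfl) (hs1.add hs2) rfl

lemma hcomp {p : A11} {d : ℕ} (h : p.IsHomogeneous d) (m : ℕ) :
    homogeneousComponent m p = if m = d then p else 0 :=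
  homogeneousComponent_of_mem ((mem_homogeneousSubmodule _ _).2 h)

lemma SqS1 : Sq s₁ = s₁ + t₂ * s₁ + t₃ * s₁ + s₁ ^ 2 := by
  simp only [Sq, s₁, t₂, t₃, x₁, x₂, y₂, map_add, map_mul, map_pow, aeval_X]
  linear_combination ((2 : A11)*(X 3)^5 + (3 : A11)*(X 3)^6 + (2 : A11)*(X 3)^7 + (X 1)^2*(X 3)^3 + (-1 : A11)*(X 1)^2*(X 3)^6 + (X 1)^3*(X 3)^2 + (2 : A11)*(X 1)^3*(X 3)^3 + (X 1)^3*(X 3)^4 + (X 1)^4*(X 3)^3 + (X 0 : A11)*(X 1)*(X 3)^3 + (-1 : A11)*(X 0 : A11)*(X 1)*(X 3)^6 + (X 0 : A11)*(X 1)^2*(X 3)^2 + (X 0 : A11)*(X 1)^2*(X 3)^3 + (-1 : A11)*(X 0 : A11)*(X 1)^2*(X 3)^5 + (X 0 : A11)*(X 1)^3*(X 3) + (-1 : A11)*(X 0 : A11)*(X 1)^3*(X 3)^4 + (-1 : A11)*(X 0 : A11)*(X 1)^4*(X 3)^3 + (X 0 : A11)^2*(X 3)^3 + (-1 : A11)*(X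 0 : A11)^2*(X 3)^6 + (X 0 : A11)^2*(X 1)*(X 3)^2 + (X 0 : A11)^2*(X 1)*(X 3)^3 + (-1 : A11)*(X 0 : A11)^2*(X 1)*(X 3)^5 + (X 0 : A11)^2*(X 1)^2*(X 3) + (X 0 : A11)^2*(X 1)^2*(X 3)^3 + (-1 : A11)*(X 0 : A11)^2*(X 1)^2*(X 3)^4 + (-2 : A11)*(X 0 : A11)^2*(X 1)^3*(X 3)^3 + (X 0 : A11)^3*(X 3)^2 + (2 : A11)*(X 0 : A11)^3*(X 3)^3 + (X 0 : A11)^3*(X 3)^4 + (X 0 : A11)^3*(X 1)*(X 3) + (-1 : A11)*(X 0 : A11)^3*(X 1)*(X 3)^4 + (-2 : A11)*(X 0 : A11)^3*(X 1)^2*(X 3)^3 + (-1 : A11)*(X 0 : A11)^3*(X 1)^3*(X 3) + (-1 : A11)*(X 0 : A11)^3*(X 1)^3*(X 3)^2 + (X 0 : A11)^4*(X 3)^3 + (-1 : A11)*(X 0 : A11)^4*(X 1)*(X 3)^3) * h2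

lemma SqS2 : Sq s₂ = s₂ + t₂ * s₂ + t₃ * s₂ + s₂ ^ 2 := by
  simp only [Sq, s₂, t₂, t₃, x₁, x₂, y₁, map_add, map_mul, map_pow, aeval_X]
  linear_combination ((2 : A11)*(X 2)^5 + (3 : A11)*(X 2)^6 + (2 : A11)*(X 2)^7 + (X 1)^2*(X 2)^3 + (-1 : A11)*(X 1)^2*(X 2)^6 + (X 1)^3*(X 2)^2 + (2 : A11)*(X 1)^3*(X 2)^3 + (X 1)^3*(X 2)^4 + (X 1)^4*(X 2)^3 + (X 0 : A11)*(X 1)*(X 2)^3 + (-1 : A11)*(X 0 : A11)*(X 1)*(X 2)^6 + (X 0 : A11)*(X 1)^2*(X 2)^2 + (X 0 : A11)*(X 1)^2*(X 2)^3 + (-1 : A11)*(X 0 : A11)*(X 1)^2*(X 2)^5 + (X 0 : A11)*(X 1)^3*(X 2) + (-1 : A11)*(X 0 : A11)*(X 1)^3*(X 2)^4 + (-1 : A11)*(X 0 : A11)*(X 1)^4*(X 2)^3 + (X 0 : A11)^2*(X 2)^3 + (-1 : A11)*(X 0 : A11)^2*(X 2)^6 + (X 0 : A11)^2*(X 1)*(X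 2)^2 + (X 0 : A11)^2*(X 1)*(X 2)^3 + (-1 : A11)*(X 0 : A11)^2*(X 1)*(X 2)^5 + (X 0 : A11)^2*(X 1)^2*(X 2) + (X 0 : A11)^2*(X 1)^2*(X 2)^3 + (-1 : A11)*(X 0 : A11)^2*(X 1)^2*(X 2)^4 + (-2 : A11)*(X 0 : A11)^2*(X 1)^3*(X 2)^3 + (X 0 : A11)^3*(X 2)^2 + (2 : A11)*(X 0 : A11)^3*(X 2)^3 + (X 0 : A11)^3*(X 2)^4 + (X 0 : A11)^3*(X 1)*(X 2) + (-1 : A11)*(X 0 : A11)^3*(X 1)*(X 2)^4 + (-2 : A11)*(X 0 : A11)^3*(X 1)^2*(X 2)^3 + (-1 : A11)*(X 0 : A11)^3*(X 1)^3*(X 2) + (-1 : A11)*(X 0 : A11)^3*(X 1)^3*(X 2)^2 + (X 0 : A11)^4*(X 2)^3 + (-1 : A11)*(X 0 : A11)^4*(X 1)*(X 2)^3) * h2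

lemma K8 : Sq t₈ = t₈ + t₂^2 * t₈ + t₃^2 * t₈ + t₁₂ + t₂ * t₁₂ + t₃ * t₁₂ + t₈^2 := by
  have e : Sq t₈ = (Sq s₁)^2 + Sq s₁ * Sq s₂ + (Sq s₂)^2 := by
    unfold t₈; simp only [map_add, map_mul, map_pow]
  rw [e, SqS1, SqS2]
  simp only [t₈, t₁₂]
  linear_combination (s₂^2*t₃ + s₂^2*t₂ + s₂^2*t₂*t₃ + s₂^3 + s₂^3*t₃ + s₂^3*t₂ + s₁*s₂*t₃ + s₁*s₂*t₂ + s₁*s₂*t₂*t₃ + (-1 : A11)*s₁*s₂^3 + s₁^2*t₃ + s₁^2*t₂ + s₁^2*t₂*t₃ + (-1 : A11)*s₁^2*s₂^2 + s₁^3 + s₁^3*t₃ + s₁^3*t₂ + (-1 : A11)*s₁^3*s₂) * h2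

lemma K12 : Sq t₁₂ = t₁₂ + t₂ * t₁₂ + t₃ * t₁₂ + t₂^2 * t₁₂ + (t₂^3 + t₃^2) * t₁₂ +
    t₂^2 * t₃ * t₁₂ + (t₂ * t₃^2 + t₈) * t₁₂ + t₃^3 * t₁₂ + t₂ * t₈ * t₁₂ +
    t₃ * t₈ * t₁₂ + t₁₂^2 := by
  have e : Sq t₁₂ = Sq s₁ * Sq s₂ * (Sq s₁ + Sq s₂) := by
    unfold t₁₂; simp only [map_add, map_mul]
  rw [e, SqS1, SqS2]
  simp only [t₈, t₁₂]
  linear_combination (s₁*s₂^2*t₃ + s₁*s₂^2*t₃^2 + s₁*s₂^2*t₂ + (3 : A11)*s₁*s₂^2*t₂*t₃ + s₁*s₂^2*t₂*t₃^2 + s₁*s₂^2*t₂^2 + s₁*s₂^2*t₂^2*t₃ + s₁*s₂^3 + (2 : A11)*s₁*s₂^3*t₃ + s₁*s₂^3*t₃^2 + (2 : A11)*s₁*s₂^3*t₂ + (2 : A11)*s₁*s₂^3*t₂*t₃ + s₁*s₂^3*t₂^2 + s₁^2*s₂*t₃ + s₁^2*s₂*t₃^2 + s₁^2*s₂*t₂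 + (3 : A11)*s₁^2*s₂*t₂*t₃ + s₁^2*s₂*t₂*t₃^2 + s₁^2*s₂*t₂^2 + s₁^2*s₂*t₂^2*t₃ + s₁^2*s₂^2 + (2 : A11)*s₁^2*s₂^2*t₃ + s₁^2*s₂^2*t₃^2 + (2 : A11)*s₁^2*s₂^2*t₂ + (2 : A11)*s₁^2*s₂^2*t₂*t₃ + s₁^2*s₂^2*t₂^2 + s₁^3*s₂ + (2 : A11)*s₁^3*s₂*t₃ + s₁^3*s₂*t₃^2 + (2 : A11)*s₁^3*s₂*t₂ + (2 : A11)*s₁^3*s₂*t₂*t₃ + s₁^3*s₂*t₂^2 + (-1 : A11)*s₁^3*s₂^3) * h2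

/-- `Sq¹ t₈ = Sq² t₈ = Sq¹ t₁₂ = 0` and `Sq² t₁₂ = t₂ t₁₂`: the degree-9 and degree-10
components of `Sq t₈` vanish, the degree-13 component of `Sq t₁₂` vanishes, and the
degree-14 component of `Sq t₁₂` is `t₂ · t₁₂`. -/
theorem stmt_11 :
    homogeneousComponent 9 (Sq t₈) = 0 ∧ homogeneousComponent 10 (Sq t₈) = 0 ∧
    homogeneousComponent 13 (Sq t₁₂) = 0 ∧ homogeneousComponent 14 (Sq t₁₂) = t₂ * t₁₂ := by
  have c8a : (t₂^2 * t₈).IsHomogeneous 12 := hmul (hpow ht2 rfl) ht8 rfl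
  have c8b : (t₃^2 * t₈).IsHomogeneous 14 := hmul (hpow ht3 rfl) ht8 rfl
  have c8c : (t₂ * t₁₂).IsHomogeneous 14 := hmul ht2 ht12 rfl
  have c8d : (t₃ * t₁₂).IsHomogeneous 15 := hmul ht3 ht12 rfl
  have c8e : (t₈^2).IsHomogeneous 16 := hpow ht8 rfl
  have d1 : (t₂^2 * t₁₂).IsHomogeneous 16 := hmul (hpow ht2 rfl) ht12 rfl
  have d2 : ((t₂^3 + t₃^2) * t₁₂).IsHomogeneous 18 :=
    hmul ((hpow ht2 rfl).add (hpow ht3 rfl)) ht12 rfl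
  have d3 : (t₂^2 * t₃ * t₁₂).IsHomogeneous 19 := hmul (hmul (hpow ht2 rfl) ht3 rfl) ht12 rfl
  have d4 : ((t₂ * t₃^2 + t₈) * t₁₂).IsHomogeneous 20 :=
    hmul ((hmul ht2 (hpow ht3 rfl) rfl).add ht8) ht12 rfl
  have d5 : (t₃^3 * t₁₂).IsHomogeneous 21 := hmul (hpow ht3 rfl) ht12 rfl
  have d6 : (t₂ * t₈ * t₁₂).IsHomogeneous 22 := hmul (hmul ht2 ht8 rfl) ht12 rfl
  have d7 : (t₃ * t₈ * t₁₂).IsHomogeneous 23 := hmul (hmul ht3 ht8 rfl) ht12 rfl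
  have d8 : (t₁₂^2).IsHomogeneous 24 := hpow ht12 rfl
  refine ⟨?_, ?_, ?_, ?_⟩
  · rw [K8]
    simp only [map_add, hcomp ht8, hcomp ht12, hcomp c8a, hcomp c8b, hcomp c8c, hcomp c8d,
      hcomp c8e]
    norm_num
  · rw [K8]
    simp only [map_add, hcomp ht8, hcomp ht12, hcomp c8a, hcomp c8b, hcomp c8c, hcomp c8d,
      hcomp c8e]
    norm_num
  · rw [K12]
    simp only [map_add, hcomp ht12, hcomp c8c, hcomp c8d, hcomp d1, hcomp d2, hcomp d3,
      hcomp d4, hcomp d5, hcomp d6, hcomp d7, hcomp d8]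
    norm_num
  · rw [K12]
    simp only [map_add, hcomp ht12, hcomp c8c, hcomp c8d, hcomp d1, hcomp d2, hcomp d3,
      hcomp d4, hcomp d5, hcomp d6, hcomp d7, hcomp d8]
    norm_num

end
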